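/- Let A, Ã be generators with A_{BC} and A_{B̃C̃} their structured perturbations such that for some λ > 0 both 1 ∈ ρ(C R(λ,A_{−1})B) and 1 ∈ ρ(C̃ R(λ,A_{−1})B̃) hold, with resolvents given by R(λ, A_{BC}) = R(λ,A) + R(λ,A_{−1})B (Id − C R(λ,A_{−1})B)^{−1} C R(λ,A) and analogously for A_{B̃C̃}. If |C R(λ,A) x| ≤ C̃ R(λ,A)|x|, |R(λ,A_{−1}) B u| ≤ R(λ,A_{−1}) B̃ |u|, |C R(λ,A_{−1})B u| ≤ C̃ R(λ,A_{−1})B̃ |u| for all x ∈ X, u ∈ U, and r(C̃ R(λ,A_{−1})B̃) < 1, then |R(λ, A_{BC}) x| ≤ R(λ, A_{B̃C̃}) x for all x ∈ X₊, and hence ‖R(λ,A_{BC})ⁿ‖ ≤ ‖R(λ,A_{B̃C̃})ⁿ‖ for all n ∈ ℕ. -/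

import Mathlib

/-!
Everything reduces to the domination `|S x| ≤ T |x|` of operators, which is stable under sums,
compositions and powers and gives `‖S‖ ≤ ‖T‖` in a solid norm. The one non-formal step is the
domination of `(1 - K)⁻¹` by `(1 - Kt)⁻¹`, which needs `(1 - Kt)⁻¹ ≥ 0`. Since `spectralRadius ℝ`
only sees real spectrum, the Neumann series of `Kt` need not converge; instead, positivity of
`(s - Kt)⁻¹`, clear for `s > ‖Kt‖`, is carried down to `s = 1` through `[1, ∞) ⊆ ρ(Kt)` by the
local expansions `(t - Kt)⁻¹ = ∑ₙ (s - t)ⁿ (s - Kt)⁻ⁿ⁻¹`.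
-/

open Filter Topology Ring spectrum

theorem nonneg_of_two_pow_nsmul_nonneg {α : Type*} [AddCommGroup α] [Lattice α]
    [IsOrderedAddMonoid α] {w : α} : ∀ k : ℕ, 0 ≤ 2 ^ k • w → 0 ≤ w
  | 0, h => by simpa using h
  | k + 1, h => nsmul_two_semiclosed <| nonneg_of_two_pow_nsmul_nonneg k <| by
      rwa [pow_succ, mul_comm, mul_nsmul] at h

section NormedLattice

variable {E : Type*} [NormedAddCommGroup E] [Lattice E] [HasSolidNorm E] [IsOrderedAddMonoid E]
  [NormedSpace ℝ E]

/-- Nothing ties the order to the scalar action here: dyadic multiples are handled by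
`nsmul_two_semiclosed`, and the rest follows since the positive cone is closed. -/
theorem smul_nonneg_of_hasSolidNorm {c : ℝ} (hc : 0 ≤ c) {v : E} (hv : 0 ≤ v) : 0 ≤ c • v := by
  have dyadic (n : ℕ) : 0 ≤ ((⌊c * 2 ^ n⌋₊ : ℝ) / 2 ^ n) • v := by
    refine nonneg_of_two_pow_nsmul_nonneg n ?_
    rw [← Nat.cast_smul_eq_nsmul ℝ, smul_smul, Nat.cast_pow, Nat.cast_ofNat,
      mul_div_cancel₀ _ (by positivity), Nat.cast_smul_eq_nsmul]
    exact nsmul_nonneg hv _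
  have hlim : Tendsto (fun n : ℕ => (⌊c * 2 ^ n⌋₊ : ℝ) / 2 ^ n) atTop (𝓝 c) :=
    (tendsto_nat_floor_mul_div_atTop hc).comp (tendsto_pow_atTop_atTop_of_one_lt one_lt_two)
  exact ge_of_tendsto' (hlim.smul_const v) dyadic

theorem monotone_smul_of_nonneg {T : E →L[ℝ] E} (hT : Monotone T) {c : ℝ} (hc : 0 ≤ c) :
    Monotone (c • T) :=
  (monotone_iff_map_nonneg _).2 fun x hx =>
    smul_nonneg_of_hasSolidNorm hc ((monotone_iff_map_nonneg T).1 hT x hx)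

theorem monotone_algebraMap_of_nonneg {c : ℝ} (hc : 0 ≤ c) :
    Monotone (algebraMap ℝ (E →L[ℝ] E) c) := by
  rw [Algebra.algebraMap_eq_smul_one]
  exact monotone_smul_of_nonneg monotone_id hc

theorem monotone_tsum {ι : Type*} {f : ι → E →L[ℝ] E} (hf : Summable f)
    (h : ∀ i, Monotone (f i)) : Monotone ⇑(∑' i, f i) :=
  (monotone_iff_map_nonneg _).2 fun x hx => by
    simpa using (hf.hasSum.mapL (ContinuousLinearMap.apply ℝ E x)).nonneg
      fun i => (monotone_iff_map_nonneg _).1 (h i) x hx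

variable [CompleteSpace E]

/-- `(a - b)⁻¹ = (∑ₙ (a⁻¹ b)ⁿ) a⁻¹`. -/
theorem monotone_ringInverse_sub {a b : E →L[ℝ] E} (ha : IsUnit a) (ha' : Monotone ⇑(a⁻¹ʳ))
    (hb : Monotone b) (hab : ‖a⁻¹ʳ * b‖ < 1) : Monotone ⇑((a - b)⁻¹ʳ) := by
  have hfactor : a - b = a * (1 - a⁻¹ʳ * b) := by
    rw [mul_sub, mul_one, ← mul_assoc, Ring.mul_inverse_cancel a ha, one_mul]
  rw [hfactor, Ring.inverse_mul (Or.inl ha), ← geom_series_eq_inverse _ hab,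
    FunLike.coe_mul_eq_comp]
  refine (monotone_tsum (summable_geometric_of_norm_lt_one hab) fun n => ?_).comp ha'
  rw [FunLike.coe_pow_eq_iterate, FunLike.coe_mul_eq_comp]
  exact (ha'.comp hb).iterate n

theorem monotone_resolvent_of_norm_lt {T : E →L[ℝ] E} (hT : Monotone T) {s : ℝ}
    (hs : ‖T‖ < s) : Monotone ⇑(resolvent T s) := by
  have hs₀ : 0 < s := (norm_nonneg T).trans_lt hs
  have hinv : (algebraMap ℝ (E →L[ℝ] E) s)⁻¹ʳ = algebraMap ℝ (E →L[ℝ] E) s⁻¹ := by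
    simpa using
      Ring.inverse_unit ((Units.mk0 s hs₀.ne').map (algebraMap ℝ (E →L[ℝ] E)).toMonoidHom)
  refine monotone_ringInverse_sub ((isUnit_iff_ne_zero.2 hs₀.ne').map _)
    (hinv ▸ monotone_algebraMap_of_nonneg (inv_nonneg.2 hs₀.le)) hT ?_
  rw [hinv, Algebra.algebraMap_eq_smul_one, smul_one_mul, norm_smul, Real.norm_of_nonneg
    (inv_nonneg.2 hs₀.le), inv_mul_lt_iff₀ hs₀, mul_one]
  exact hs

theorem monotone_resolvent_of_le {T : E →L[ℝ] E} {s t : ℝ} (hs : s ∈ resolventSet ℝ T)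
    (hpos : Monotone ⇑(resolvent T s)) (hts : t ≤ s) (hst : (s - t) * ‖resolvent T s‖ < 1) :
    Monotone ⇑(resolvent T t) := by
  have hsplit : algebraMap ℝ (E →L[ℝ] E) t - T =
      (algebraMap ℝ _ s - T) - algebraMap ℝ _ (s - t) := by
    rw [map_sub]; abel
  rw [resolvent, hsplit]
  refine monotone_ringInverse_sub hs hpos (monotone_algebraMap_of_nonneg (sub_nonneg.2 hts)) ?_
  rw [Algebra.algebraMap_eq_smul_one (s - t), mul_smul_comm, mul_one, norm_smul,
    Real.norm_of_nonneg (sub_nonneg.2 hts)]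
  exact hst

/-- Starting above `‖T‖`, move down to `t` in steps shorter than `1 / sup ‖resolvent T s‖`,
the supremum being taken over the compact interval `[t, s₀]`. -/
theorem monotone_resolvent_of_Ici_subset_resolventSet {T : E →L[ℝ] E} (hT : Monotone T) {t : ℝ}
    (ht : Set.Ici t ⊆ resolventSet ℝ T) : Monotone ⇑(resolvent T t) := by
  set s₀ := max t (‖T‖ + 1)
  obtain ⟨M, hM⟩ := isCompact_Icc.exists_bound_of_continuousOn (f := resolvent T)
    (s := Set.Icc t s₀) fun s hs =>
      (hasDerivAt_resolvent_const_left (ht hs.1)).continuousAt.continuousWithinAt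
  set δ := (|M| + 1)⁻¹
  have hδ : 0 < δ := by positivity
  have hδM : δ * |M| < 1 := by
    rw [inv_mul_lt_one₀ (by positivity)]; linarith
  have grid (k : ℕ) : Monotone ⇑(resolvent T (max t (s₀ - k * δ))) := by
    induction k with
    | zero => simpa [s₀] using monotone_resolvent_of_norm_lt hT (by simp [s₀] : ‖T‖ < s₀)
    | succ k ih =>
      set s := max t (s₀ - k * δ)
      have hs : s ∈ Set.Icc t s₀ :=
        ⟨le_max_left _ _, max_le (le_max_left _ _) (sub_le_self _ (by positivity))⟩
      refine monotone_resolvent_of_le (ht hs.1) ih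
        (max_le_max le_rfl (by push_cast; linarith)) ?_
      calc (s - max t (s₀ - ↑(k + 1) * δ)) * ‖resolvent T s‖ ≤ δ * |M| := by
            gcongr
            · rw [sub_le_iff_le_add]
              refine max_le ?_ ?_ <;> push_cast <;>
                linarith [le_max_left t (s₀ - (k + 1) * δ), le_max_right t (s₀ - (k + 1) * δ)]
            · exact (hM s hs).trans (le_abs_self M)
        _ < 1 := hδM
  obtain ⟨k, hk⟩ := exists_nat_ge ((s₀ - t) / δ)
  have hkt : s₀ - k * δ ≤ t := by rw [div_le_iff₀ hδ] at hk; linarith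
  simpa [max_eq_left hkt] using grid k

end NormedLattice

theorem Ici_subset_resolventSet_of_spectralRadius_lt {A : Type*} [NormedRing A]
    [NormedAlgebra ℝ A] [CompleteSpace A] {a : A} {t : ℝ}
    (h : spectralRadius ℝ a < ENNReal.ofReal t) : Set.Ici t ⊆ resolventSet ℝ a := fun s hs =>
  mem_resolventSet_of_spectralRadius_lt <| h.trans_le <| by
    simpa using ENNReal.ofReal_le_ofReal (hs.trans (le_abs_self s))

section Domination

variable {E F G : Type*}
  [NormedAddCommGroup E] [Lattice E] [NormedSpace ℝ E]
  [NormedAddCommGroup F] [Lattice F] [NormedSpace ℝ F]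
  [NormedAddCommGroup G] [Lattice G] [NormedSpace ℝ G]

def DominatedBy (S T : E →L[ℝ] F) : Prop :=
  ∀ x, |S x| ≤ T |x|

theorem DominatedBy.monotone [IsOrderedAddMonoid E] [IsOrderedAddMonoid F] {S T : E →L[ℝ] F}
    (h : DominatedBy S T) : Monotone T :=
  (monotone_iff_map_nonneg T).2 fun x hx => abs_of_nonneg hx ▸ (abs_nonneg _).trans (h x)

theorem dominatedBy_self [IsOrderedAddMonoid E] [IsOrderedAddMonoid F] {T : E →L[ℝ] F}
    (hT : Monotone T) : DominatedBy T T := fun x =>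
  abs_le'.2 ⟨hT (le_abs_self x), by simpa using hT (neg_le_abs x)⟩

theorem DominatedBy.add [IsOrderedAddMonoid F] {S₁ S₂ T₁ T₂ : E →L[ℝ] F}
    (h₁ : DominatedBy S₁ T₁) (h₂ : DominatedBy S₂ T₂) : DominatedBy (S₁ + S₂) (T₁ + T₂) := fun x =>
  (abs_add_le _ _).trans (add_le_add (h₁ x) (h₂ x))

theorem DominatedBy.comp [IsOrderedAddMonoid F] [IsOrderedAddMonoid G] {S T : F →L[ℝ] G}
    {S' T' : E →L[ℝ] F} (h : DominatedBy S T) (h' : DominatedBy S' T') :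
    DominatedBy (S.comp S') (T.comp T') := fun x =>
  (h (S' x)).trans (h.monotone (h' x))

theorem DominatedBy.pow [IsOrderedAddMonoid E] {S T : E →L[ℝ] E} (h : DominatedBy S T) :
    ∀ n : ℕ, DominatedBy (S ^ n) (T ^ n)
  | 0 => by simpa using dominatedBy_self (T := (1 : E →L[ℝ] E)) monotone_id
  | n + 1 => by simpa only [pow_succ, ContinuousLinearMap.mul_def] using (h.pow n).comp h

theorem DominatedBy.opNorm_le [IsOrderedAddMonoid E] [HasSolidNorm E] [HasSolidNorm F]
    {S T : E →L[ℝ] F} (h : DominatedBy S T) : ‖S‖ ≤ ‖T‖ :=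
  S.opNorm_le_bound (norm_nonneg T) fun x => calc
    ‖S x‖ ≤ ‖T |x|‖ := norm_le_norm_of_abs_le_abs ((h x).trans (le_abs_self _))
    _ ≤ ‖T‖ * ‖|x|‖ := T.le_opNorm _
    _ = ‖T‖ * ‖x‖ := by rw [norm_abs_eq_norm]

/-- `u = (1 - K)⁻¹ v` solves `u = v + K u`, so `(1 - Kt) |u| ≤ |v|`. -/
theorem DominatedBy.ringInverse_one_sub [IsOrderedAddMonoid E] {K Kt : E →L[ℝ] E}
    (h : DominatedBy K Kt) (hK : IsUnit (1 - K)) (hKt : IsUnit (1 - Kt))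
    (hinv : Monotone ⇑((1 - Kt)⁻¹ʳ)) :
    DominatedBy (1 - K)⁻¹ʳ (1 - Kt)⁻¹ʳ := by
  intro v
  set u := (1 - K)⁻¹ʳ v
  have hu : u = v + K u := by
    have := congrArg (· v) (Ring.mul_inverse_cancel _ hK)
    simp only [mul_apply_eq_comp, sub_apply, one_apply_eq_self] at this
    rw [← this]; abel
  have hle : (1 - Kt) |u| ≤ |v| := by
    rw [sub_apply, one_apply_eq_self, sub_le_iff_le_add]
    calc |u| = |v + K u| := congrArg _ hu
      _ ≤ |v| + Kt |u| := (abs_add_le _ _).trans (add_le_add_right (h u) _)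
  calc |u| = (1 - Kt)⁻¹ʳ ((1 - Kt) |u|) := by
        rw [← mul_apply_eq_comp, Ring.inverse_mul_cancel _ hKt, one_apply_eq_self]
    _ ≤ (1 - Kt)⁻¹ʳ |v| := hinv hle

end Domination

theorem dominated_resolvent_of_perturbed_operators_general
    {X U : Type*}
    [NormedAddCommGroup X] [Lattice X] [HasSolidNorm X] [IsOrderedAddMonoid X] [NormedSpace ℝ X]
    [NormedAddCommGroup U] [Lattice U] [HasSolidNorm U] [IsOrderedAddMonoid U] [NormedSpace ℝ U] [CompleteSpace U]
    (RA : X →L[ℝ] X) (hRA : ∀ x : X, 0 ≤ x → 0 ≤ RA x)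
    (P Pt : U →L[ℝ] X)
    (hP : ∀ u : U, |P u| ≤ Pt |u|)
    (Cr Ctr : X →L[ℝ] U)
    (hCr : ∀ x : X, |Cr x| ≤ Ctr |x|)
    (K Kt : U →L[ℝ] U)
    (hK : ∀ u : U, |K u| ≤ Kt |u|)
    (h1K : (1 : ℝ) ∉ spectrum ℝ K)
    (hrKt : spectralRadius ℝ Kt < 1) :
    (∀ x : X, 0 ≤ x →
      |(RA + P.comp ((Ring.inverse (1 - K)).comp Cr)) x| ≤
        (RA + Pt.comp ((Ring.inverse (1 - Kt)).comp Ctr)) x) ∧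
    ∀ n : ℕ, ‖(RA + P.comp ((Ring.inverse (1 - K)).comp Cr)) ^ n‖ ≤
        ‖(RA + Pt.comp ((Ring.inverse (1 - Kt)).comp Ctr)) ^ n‖ := by
  have hKu : IsUnit (1 - K) := by simpa using spectrum.notMem_iff.mp h1K
  have hres : Set.Ici 1 ⊆ resolventSet ℝ Kt :=
    Ici_subset_resolventSet_of_spectralRadius_lt (by simpa using hrKt)
  have hKtu : IsUnit (1 - Kt) := by
    simpa [mem_resolventSet_iff] using hres (Set.mem_Ici.2 le_rfl)
  have hinv : Monotone ⇑((1 - Kt)⁻¹ʳ) := by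
    simpa [resolvent] using monotone_resolvent_of_Ici_subset_resolventSet
      (DominatedBy.monotone hK) hres
  have hdom : DominatedBy (RA + P.comp ((1 - K)⁻¹ʳ.comp Cr))
      (RA + Pt.comp ((1 - Kt)⁻¹ʳ.comp Ctr)) :=
    (dominatedBy_self ((monotone_iff_map_nonneg RA).2 hRA)).add <| DominatedBy.comp hP <|
      (DominatedBy.ringInverse_one_sub hK hKu hKtu hinv).comp hCr
  exact ⟨fun x hx => by simpa only [abs_of_nonneg hx] using hdom x,
    fun n => (hdom.pow n).opNorm_le⟩

/-- Domination of the resolvents of structured perturbations.  For a fixed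
`λ` let `RA = R(λ,A)`, `P = R(λ,A₋₁)B`, `Cr = C R(λ,A)`, `K = C R(λ,A₋₁)B`
and analogously `Pt, Ctr, Kt` for the dominating operators `B̃, C̃`.  If
`1 ∈ ρ(K) ∩ ρ(Kt)`, the dominations `|Cr x| ≤ Ctr |x|`, `|P u| ≤ Pt |u|`,
`|K u| ≤ Kt |u|` hold, `RA, Pt, Ctr, Kt` are positive and `r(Kt) < 1`, then
the resolvents `R(λ,A_{BC}) = RA + P (1−K)⁻¹ Cr` and
`R(λ,A_{B̃C̃}) = RA + Pt (1−Kt)⁻¹ Ctr` satisfy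
`|R(λ,A_{BC}) x| ≤ R(λ,A_{B̃C̃}) x` for `x ≥ 0`, and hence
`‖R(λ,A_{BC})ⁿ‖ ≤ ‖R(λ,A_{B̃C̃})ⁿ‖` for all `n`. -/
theorem dominated_resolvent_of_perturbed_operators
    {X U : Type*}
    [NormedAddCommGroup X] [Lattice X] [HasSolidNorm X] [IsOrderedAddMonoid X] [NormedSpace ℝ X] [CompleteSpace X]
    [NormedAddCommGroup U] [Lattice U] [HasSolidNorm U] [IsOrderedAddMonoid U] [NormedSpace ℝ U] [CompleteSpace U]
    (RA : X →L[ℝ] X) (hRA : ∀ x : X, 0 ≤ x → 0 ≤ RA x)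
    (P Pt : U →L[ℝ] X)
    (hPtpos : ∀ u : U, 0 ≤ u → 0 ≤ Pt u)
    (hP : ∀ u : U, |P u| ≤ Pt |u|)
    (Cr Ctr : X →L[ℝ] U)
    (hCtrpos : ∀ x : X, 0 ≤ x → 0 ≤ Ctr x)
    (hCr : ∀ x : X, |Cr x| ≤ Ctr |x|)
    (K Kt : U →L[ℝ] U)
    (hKtpos : ∀ u : U, 0 ≤ u → 0 ≤ Kt u)
    (hK : ∀ u : U, |K u| ≤ Kt |u|)
    (h1K : (1 : ℝ) ∉ spectrum ℝ K) (h1Kt : (1 : ℝ) ∉ spectrum ℝ Kt)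
    (hrKt : spectralRadius ℝ Kt < 1) :
    (∀ x : X, 0 ≤ x →
      |(RA + P.comp ((Ring.inverse (1 - K)).comp Cr)) x| ≤
        (RA + Pt.comp ((Ring.inverse (1 - Kt)).comp Ctr)) x) ∧
    ∀ n : ℕ, ‖(RA + P.comp ((Ring.inverse (1 - K)).comp Cr)) ^ n‖ ≤
        ‖(RA + Pt.comp ((Ring.inverse (1 - Kt)).comp Ctr)) ^ n‖ :=
  dominated_resolvent_of_perturbed_operators_general RA hRA P Pt hP Cr Ctr hCr K Kt hK h1K hrKt
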